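/- Let ν_ρ, ν₄ ∈ ℝ with |ν₄| + 2|ν_ρ| < 1, v_{ρ,±}² = (1∓ν₄)² - 4ν_ρ² (positive roots), K = ((1-2ν_ρ)² - ν₄²)/(v_{ρ,+}v_{ρ,-}), ζ_ρ = 2ν_ρ/(v_{ρ,+}v_{ρ,-}), η_ρ = -1/2 + (4 - v_{ρ,+}² - v_{ρ,-}²)/(4 v_{ρ,+}v_{ρ,-}). Then 2(1 + η_ρ - ζ_ρ) = K + 1 and 2(1 + η_ρ + ζ_ρ) = K⁻¹ + 1. -/

import Mathlib

/-! With `A = (1 - 2νρ)² - ν₄²` and `B = (1 + 2νρ)² - ν₄²`, the defining equations of `v₊, v₋`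
give `(v₊v₋)² = A B` and `4 - v₊² - v₋² = 2A + 8νρ`. The first shows `K = A/(v₊v₋)` has inverse
`B/(v₊v₋)`; the second, together with `B - A = 8νρ`, turns both relations into identities of
rational functions. -/

section ScalingIdentities

variable {R : Type*} [CommRing R] {ν₄ νρ vp vm : R}

lemma mul_sq_eq_of_sq_eq (hvp2 : vp ^ 2 = (1 - ν₄) ^ 2 - 4 * νρ ^ 2)
    (hvm2 : vm ^ 2 = (1 + ν₄) ^ 2 - 4 * νρ ^ 2) :
    (vp * vm) ^ 2 = ((1 - 2 * νρ) ^ 2 - ν₄ ^ 2) * ((1 + 2 * νρ) ^ 2 - ν₄ ^ 2) := by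
  rw [mul_pow, hvp2, hvm2]
  ring

lemma four_sub_sq_sub_sq_eq_of_sq_eq (hvp2 : vp ^ 2 = (1 - ν₄) ^ 2 - 4 * νρ ^ 2)
    (hvm2 : vm ^ 2 = (1 + ν₄) ^ 2 - 4 * νρ ^ 2) :
    4 - vp ^ 2 - vm ^ 2 = 2 * ((1 - 2 * νρ) ^ 2 - ν₄ ^ 2) + 8 * νρ := by
  linear_combination -hvp2 - hvm2

end ScalingIdentities

lemma inv_div_eq_div_of_mul_eq_sq {F : Type*} [Field F] {a b p : F} (hp : p ≠ 0)
    (hab : a * b = p ^ 2) : (a / p)⁻¹ = b / p := by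
  have ha : a ≠ 0 := left_ne_zero_of_mul (hab ▸ pow_ne_zero 2 hp)
  rw [inv_div, div_eq_div_iff ha hp, ← sq, ← hab, mul_comm]

theorem stmt_18_general (ν₄ νρ : ℝ)
    (vp vm : ℝ) (hvp : 0 < vp) (hvm : 0 < vm)
    (hvp2 : vp ^ 2 = (1 - ν₄) ^ 2 - 4 * νρ ^ 2)
    (hvm2 : vm ^ 2 = (1 + ν₄) ^ 2 - 4 * νρ ^ 2)
    (K ζρ ηρ : ℝ)
    (hK : K = ((1 - 2 * νρ) ^ 2 - ν₄ ^ 2) / (vp * vm))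
    (hζ : ζρ = 2 * νρ / (vp * vm))
    (hη : ηρ = -(1 / 2) + (4 - vp ^ 2 - vm ^ 2) / (4 * vp * vm)) :
    2 * (1 + ηρ - ζρ) = K + 1 ∧ 2 * (1 + ηρ + ζρ) = K⁻¹ + 1 := by
  have hP : vp * vm ≠ 0 := (mul_pos hvp hvm).ne'
  have hKinv : K⁻¹ = ((1 + 2 * νρ) ^ 2 - ν₄ ^ 2) / (vp * vm) :=
    hK ▸ inv_div_eq_div_of_mul_eq_sq hP (mul_sq_eq_of_sq_eq hvp2 hvm2).symm
  rw [hη, four_sub_sq_sub_sq_eq_of_sq_eq hvp2 hvm2, hζ]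
  constructor
  · rw [hK]; field_simp; ring
  · rw [hKinv]; field_simp; ring

/-- Extended scaling relations. With
`K = ((1-2ν_ρ)² - ν₄²)/(v₊v₋)`, `ζ_ρ = 2ν_ρ/(v₊v₋)`,
`η_ρ = -1/2 + (4 - v₊² - v₋²)/(4v₊v₋)`, one has
`2(1 + η_ρ - ζ_ρ) = K + 1` and `2(1 + η_ρ + ζ_ρ) = K⁻¹ + 1`. -/
theorem stmt_18 (ν₄ νρ : ℝ) (h : |ν₄| + 2 * |νρ| < 1)
    (vp vm : ℝ) (hvp : 0 < vp) (hvm : 0 < vm)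
    (hvp2 : vp ^ 2 = (1 - ν₄) ^ 2 - 4 * νρ ^ 2)
    (hvm2 : vm ^ 2 = (1 + ν₄) ^ 2 - 4 * νρ ^ 2)
    (K ζρ ηρ : ℝ)
    (hK : K = ((1 - 2 * νρ) ^ 2 - ν₄ ^ 2) / (vp * vm))
    (hζ : ζρ = 2 * νρ / (vp * vm))
    (hη : ηρ = -(1 / 2) + (4 - vp ^ 2 - vm ^ 2) / (4 * vp * vm)) :
    2 * (1 + ηρ - ζρ) = K + 1 ∧ 2 * (1 + ηρ + ζρ) = K⁻¹ + 1 :=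
  stmt_18_general ν₄ νρ vp vm hvp hvm hvp2 hvm2 K ζρ ηρ hK hζ hη
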